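/- arXiv:1406.6880 — 5 statements merged into one kernel-verified Lean document; each statement's English description precedes it below -/
import Mathlib

section
/- The kernel K(x,y) = e^{xy} is strictly totally positive on ℝ × ℝ: for every m ≥ 1 and every pair of strictly increasing m-tuples x₁ < x₂ < ... < x_m and y₁ < y₂ < ... < y_m of real numbers, the determinant of the m × m matrix with (i,j)-entry e^{x_i y_j} is strictly positive. -/
/-! By homotopy: the strictly increasing pairs `(x, y)` form a convex, hence connected, set on
which the determinant is continuous, and it is positive at `xᵢ = i, yⱼ = j`, where the matrix is
the Vandermonde matrix of `eⁱ`. So it suffices that the determinant never vanishes there. A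
kernel vector `c` would give an exponential sum `∑ⱼ cⱼ exp (yⱼ t)` vanishing at the `m` points
`xᵢ`; after multiplying by `exp (-y₀ t)`, Rolle's theorem yields a sum with `m - 1` exponents
vanishing at `m - 1` points, and induction forces `c = 0`. -/

open Real Set Finset Matrix

theorem convex_setOf_strictMono {ι 𝕜 β : Type*} [Preorder ι] [Semiring 𝕜] [PartialOrder 𝕜]
    [AddCommMonoid β] [PartialOrder β] [IsOrderedCancelAddMonoid β] [Module 𝕜 β]
    [PosSMulStrictMono 𝕜 β] :
    Convex 𝕜 {u : ι → β | StrictMono u} := by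
  intro u hu v hv a b ha hb hab i j hij
  simp only [Pi.add_apply, Pi.smul_apply]
  rcases ha.eq_or_lt with rfl | ha'
  · rw [zero_add] at hab
    simpa [hab] using hv hij
  · exact add_lt_add_of_lt_of_le (smul_lt_smul_of_pos_left (hu hij) ha')
      (smul_le_smul_of_nonneg_left (hv hij).le hb)

theorem IsPreconnected.lt_apply_of_forall_ne {X α : Type*} [TopologicalSpace X] [LinearOrder α]
    [TopologicalSpace α] [OrderClosedTopology α] {s : Set X} (hs : IsPreconnected s)
    {f : X → α} (hf : ContinuousOn f s) {c : α} (hfc : ∀ x ∈ s, f x ≠ c) {a b : X}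
    (ha : a ∈ s) (hb : b ∈ s) (hca : c < f a) : c < f b := by
  by_contra! hbc
  obtain ⟨x, hx, hxc⟩ := hs.intermediate_value hb ha hf ⟨hbc, hca.le⟩
  exact hfc x hx hxc

theorem det_vandermonde_pos {R : Type*} [CommRing R] [LinearOrder R] [IsStrictOrderedRing R]
    {n : ℕ} {v : Fin n → R} (hv : StrictMono v) : 0 < (vandermonde v).det := by
  rw [det_vandermonde]
  exact prod_pos fun i _ => prod_pos fun j hj => sub_pos.mpr (hv (mem_Ioi.mp hj))

theorem exists_strictMono_hasDerivAt_eq_zero {f f' : ℝ → ℝ} (hf : ∀ t, HasDerivAt f (f' t) t)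
    {n : ℕ} {z : Fin (n + 1) → ℝ} (hz : StrictMono z) (hfz : ∀ i, f (z i) = 0) :
    ∃ w : Fin n → ℝ, StrictMono w ∧ ∀ i, f' (w i) = 0 := by
  have hroot : ∀ i : Fin n, ∃ w ∈ Ioo (z i.castSucc) (z i.succ), f' w = 0 := fun i =>
    exists_hasDerivAt_eq_zero (hz Fin.castSucc_lt_succ)
      (fun t _ => (hf t).continuousAt.continuousWithinAt) (by rw [hfz, hfz]) (fun t _ => hf t)
  choose w hw hw0 using hroot
  refine ⟨w, fun i j hij => ?_, hw0⟩
  calc w i < z i.succ := (hw i).2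
    _ ≤ z j.castSucc := hz.monotone (Fin.succ_le_castSucc_iff.mpr hij)
    _ < w j := (hw j).1

noncomputable def expSum {ι : Type*} [Fintype ι] (a c : ι → ℝ) (t : ℝ) : ℝ :=
  ∑ j, c j * exp (a j * t)

section ExpSum

variable {ι : Type*} [Fintype ι] (a c : ι → ℝ)

theorem hasDerivAt_expSum (t : ℝ) : HasDerivAt (expSum a c) (expSum a (a * c) t) t := by
  unfold expSum
  refine HasDerivAt.fun_sum fun j _ => ?_
  have hlin : HasDerivAt (fun t => a j * t) (a j) t := by
    simpa using (hasDerivAt_id t).const_mul (a j)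
  exact (hlin.exp.const_mul (c j)).congr_deriv (by rw [Pi.mul_apply]; ring)

theorem expSum_sub_const (b t : ℝ) :
    expSum (fun j => a j - b) c t = exp (-(b * t)) * expSum a c t := by
  rw [expSum, expSum, mul_sum]
  refine sum_congr rfl fun j _ => ?_
  rw [mul_left_comm, ← exp_add]
  ring_nf

end ExpSum

theorem eq_zero_of_expSum_eq_zero {n : ℕ} {a c z : Fin n → ℝ} (ha : StrictMono a)
    (hz : StrictMono z) (hc : ∀ i, expSum a c (z i) = 0) : c = 0 := by
  induction n with
  | zero => exact Subsingleton.elim _ _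
  | succ n ih =>
    set b : Fin (n + 1) → ℝ := fun j => a j - a 0 with hb_def
    have hb : StrictMono b := fun i j hij => sub_lt_sub_right (ha hij) _
    have hbc : ∀ i, expSum b c (z i) = 0 := fun i => by
      rw [hb_def, expSum_sub_const, hc, mul_zero]
    obtain ⟨w, hw, hbcw⟩ := exists_strictMono_hasDerivAt_eq_zero (hasDerivAt_expSum b c) hz hbc
    -- the derivative of the shifted sum has lost its `j = 0` term, since `b 0 = 0`
    have htail : (fun j : Fin n => b j.succ * c j.succ) = 0 :=
      ih (hb.comp Fin.strictMono_succ) hw fun i => by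
        simpa [expSum, Fin.sum_univ_succ, hb_def] using hbcw i
    have hc_succ (j : Fin n) : c j.succ = 0 :=
      (mul_eq_zero.mp (congrFun htail j)).resolve_left (sub_ne_zero.mpr (ha j.succ_pos).ne')
    have hc_zero : c 0 = 0 := by
      simpa [expSum, Fin.sum_univ_succ, hb_def, hc_succ] using hbc 0
    funext j
    cases j using Fin.cases with
    | zero => exact hc_zero
    | succ j => exact hc_succ j

theorem det_exp_mul_ne_zero {m : ℕ} {x y : Fin m → ℝ} (hx : StrictMono x) (hy : StrictMono y) :
    (of fun i j => exp (x i * y j)).det ≠ 0 := by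
  rw [Ne, ← exists_mulVec_eq_zero_iff]
  rintro ⟨v, hv, hxv⟩
  refine hv (eq_zero_of_expSum_eq_zero hy hx fun i => ?_)
  simpa [expSum, mulVec, dotProduct, mul_comm] using congrFun hxv i

theorem det_exp_natCast_mul_pos (m : ℕ) : 0 < (of fun i j : Fin m => exp ((i : ℝ) * j)).det := by
  have hv : (of fun i j : Fin m => exp ((i : ℝ) * j)) = vandermonde fun i => exp i := by
    ext i j
    rw [of_apply, vandermonde_apply, mul_comm, exp_nat_mul]
  rw [hv]
  exact det_vandermonde_pos (exp_strictMono.comp (Nat.strictMono_cast.comp Fin.val_strictMono))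

/-- The kernel `K(x,y) = exp (x*y)` is strictly totally positive on `ℝ × ℝ`:
for every `m ≥ 1` and strictly increasing `m`-tuples `x`, `y` of reals, the determinant of
the matrix with entries `exp (x i * y j)` is strictly positive. -/
theorem exp_kernel_strictly_totally_positive :
    ∀ m : ℕ, 0 < m → ∀ x y : Fin m → ℝ, StrictMono x → StrictMono y →
      0 < (Matrix.of fun i j => Real.exp (x i * y j)).det := by
  intro m _ x y hx hy
  set S := {u : Fin m → ℝ | StrictMono u} ×ˢ {u : Fin m → ℝ | StrictMono u}
  have hS : IsPreconnected S :=
    (convex_setOf_strictMono.prod convex_setOf_strictMono).isPreconnected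
  have hcont : Continuous fun p : (Fin m → ℝ) × (Fin m → ℝ) => (of fun i j =>
      exp (p.1 i * p.2 j)).det :=
    Continuous.matrix_det (by fun_prop)
  have hnat : StrictMono fun i : Fin m => (i : ℝ) := Nat.strictMono_cast.comp Fin.val_strictMono
  exact hS.lt_apply_of_forall_ne hcont.continuousOn (fun p hp => det_exp_mul_ne_zero hp.1 hp.2)
    (show ((↑), (↑)) ∈ S from ⟨hnat, hnat⟩) (show (x, y) ∈ S from ⟨hx, hy⟩)
    (det_exp_natCast_mul_pos m)
end

section
/- For every β > 0, the kernel K(x,y) = (x + y)^{−β} is strictly totally positive on (0,∞) × (0,∞): for all m ≥ 1 and strictly increasing m-tuples 0 < x₁ < ... < x_m and 0 < y₁ < ... < y_m, det[(x_i + y_j)^{−β}] > 0. -/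
/-!
The determinant never vanishes: if `∑ⱼ cⱼ (t + yⱼ)^(-β)` vanishes at `m` points `t > 0`, multiply
it by `(t + y_m)^β`, which makes the last term constant; by Rolle the derivative vanishes at
`m - 1` interlacing points, and it is `(t + y_m)^(β-1) ∑_{j<m} β (yⱼ - y_m) cⱼ (t + yⱼ)^(-(β+1))`,
so induction on `m` gives `c = 0`. The admissible parameters `(β, y)` form a convex set on which
the determinant is continuous, so its sign is that at `β = 1`, `y = x`. There the matrix
`(xᵢ + xⱼ)⁻¹ = ∫₀^∞ e^(-xᵢ s) e^(-xⱼ s) ds` is a Gram matrix, hence has nonnegative determinant.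
-/

open Set MeasureTheory Real Matrix

theorem exists_strictMono_hasDerivAt_eq_zero_s4 {f f' : ℝ → ℝ} {s : Set ℝ} (hs : s.OrdConnected)
    (hf : ∀ t ∈ s, HasDerivAt f (f' t) t) {m : ℕ} {x : Fin (m + 1) → ℝ} (hx : StrictMono x)
    (hxs : ∀ i, x i ∈ s) (hfx : ∀ i, f (x i) = 0) :
    ∃ z : Fin m → ℝ, StrictMono z ∧ (∀ i, z i ∈ s) ∧ ∀ i, f' (z i) = 0 := by
  have hsub (i : Fin m) : Icc (x i.castSucc) (x i.succ) ⊆ s := hs.out (hxs _) (hxs _)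
  have hrolle (i : Fin m) : ∃ z ∈ Ioo (x i.castSucc) (x i.succ), f' z = 0 :=
    exists_hasDerivAt_eq_zero (hx i.castSucc_lt_succ)
      (fun t ht => (hf t (hsub i ht)).continuousAt.continuousWithinAt)
      ((hfx _).trans (hfx _).symm) (fun t ht => hf t (hsub i (Ioo_subset_Icc_self ht)))
  choose z hz hz' using hrolle
  refine ⟨z, fun i j hij => ?_, fun i => hsub i (Ioo_subset_Icc_self (hz i)), hz'⟩
  calc z i < x i.succ := (hz i).2
    _ ≤ x j.castSucc := hx.monotone (Fin.succ_le_castSucc_iff.2 hij)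
    _ < z j := (hz j).1

theorem hasDerivAt_add_rpow_neg_mul_add_rpow {a b β t : ℝ} (ha : 0 < t + a) (hb : 0 < t + b) :
    HasDerivAt (fun s => (s + a) ^ (-β) * (s + b) ^ β)
      (β * (a - b) * ((t + a) ^ (-(β + 1)) * (t + b) ^ (β - 1))) t := by
  have hderiv (c p : ℝ) (hc : 0 < t + c) :
      HasDerivAt (fun s => (s + c) ^ p) (p * (t + c) ^ (p - 1)) t := by
    simpa using ((hasDerivAt_id t).add_const c).rpow_const (p := p) (Or.inl hc.ne')
  refine ((hderiv a (-β) ha).mul (hderiv b β hb)).congr_deriv ?_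
  rw [show -β - 1 = -(β + 1) by ring, rpow_neg ha.le, rpow_neg ha.le, rpow_add ha, rpow_one,
    rpow_sub_one hb.ne']
  field_simp
  ring

theorem convex_setOf_strictMono_s4 {ι : Type*} [Preorder ι] :
    Convex ℝ {f : ι → ℝ | StrictMono f} := by
  intro f hf g hg a b ha hb hab i j hij
  simp only [Pi.add_apply, Pi.smul_apply, smul_eq_mul]
  rcases ha.eq_or_lt with rfl | ha
  · simpa [show b = 1 by linarith] using hg hij
  · exact add_lt_add_of_lt_of_le (mul_lt_mul_of_pos_left (hf hij) ha)
      (mul_le_mul_of_nonneg_left (hg hij).le hb)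

theorem IsPreconnected.pos_of_ne_zero {X : Type*} [TopologicalSpace X] {S : Set X}
    (hS : IsPreconnected S) {f : X → ℝ} (hf : ContinuousOn f S) (hne : ∀ p ∈ S, f p ≠ 0)
    {a b : X} (ha : a ∈ S) (hb : b ∈ S) (hfa : 0 < f a) : 0 < f b := by
  by_contra! hfb
  obtain ⟨p, hp, hp0⟩ := hS.intermediate_value hb ha hf ⟨hfb, hfa.le⟩
  exact hne p hp hp0

theorem inv_add_eq_integral_Ioi_exp_mul_exp {a b : ℝ} (hab : 0 < a + b) :
    (a + b)⁻¹ = ∫ s in Ioi 0, exp (-a * s) * exp (-b * s) := by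
  simp_rw [← exp_add, ← add_mul, ← neg_add]
  rw [integral_exp_mul_Ioi (by linarith) 0, mul_zero, exp_zero, neg_div_neg_eq, one_div]

theorem integrableOn_Ioi_exp_mul_exp {a b : ℝ} (hab : 0 < a + b) :
    IntegrableOn (fun s => exp (-a * s) * exp (-b * s)) (Ioi 0) := by
  simp_rw [← exp_add, ← add_mul, ← neg_add]
  exact integrableOn_exp_mul_Ioi (by linarith) 0

theorem posSemidef_inv_add {ι : Type*} [Fintype ι] {x : ι → ℝ} (hx : ∀ i, 0 < x i) :
    (Matrix.of fun i j => (x i + x j)⁻¹).PosSemidef := by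
  refine .of_dotProduct_mulVec_nonneg ?_ fun c => ?_
  · ext i j
    simp [add_comm]
  have hxx (i j : ι) : 0 < x i + x j := add_pos (hx i) (hx j)
  have hterm (i j : ι) : IntegrableOn (fun s => c i * exp (-x i * s) * (c j * exp (-x j * s)))
      (Ioi 0) :=
    ((integrableOn_Ioi_exp_mul_exp (hxx i j)).const_mul (c i * c j)).congr
      (ae_of_all _ fun s => by ring)
  have hquad : star c ⬝ᵥ (Matrix.of (fun i j => (x i + x j)⁻¹) *ᵥ c) =
      ∫ s in Ioi 0, (∑ i, c i * exp (-x i * s)) ^ 2 := by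
    simp_rw [sq, Finset.sum_mul_sum]
    rw [integral_finsetSum _ fun i _ => integrable_finsetSum _ fun j _ => hterm i j]
    simp only [dotProduct, mulVec]
    refine Finset.sum_congr rfl fun i _ => ?_
    rw [integral_finsetSum _ fun j _ => hterm i j, Finset.mul_sum]
    refine Finset.sum_congr rfl fun j _ => ?_
    rw [of_apply, inv_add_eq_integral_Ioi_exp_mul_exp (hxx i j), ← integral_mul_const,
      ← integral_const_mul]
    exact integral_congr_ae (ae_of_all _ fun s => by simp only [star_trivial]; ring)
  rw [hquad]
  exact setIntegral_nonneg measurableSet_Ioi fun s _ => sq_nonneg _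

theorem eq_zero_of_sum_add_rpow_neg_mul_eq_zero {m : ℕ} {β : ℝ} (hβ : 0 < β) {y : Fin m → ℝ}
    (hy : Function.Injective y) (hy0 : ∀ j, 0 < y j) {x : Fin m → ℝ} (hx : StrictMono x)
    (hx0 : ∀ i, 0 < x i) {c : Fin m → ℝ} (hc : ∀ i, ∑ j, (x i + y j) ^ (-β) * c j = 0) :
    c = 0 := by
  induction m generalizing β with
  | zero => exact Subsingleton.elim _ _
  | succ m ih =>
    set L := Fin.last m
    have hpos (t : ℝ) (ht : t ∈ Ioi 0) (j) : 0 < t + y j := add_pos ht (hy0 j)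
    have hderiv (t : ℝ) (ht : t ∈ Ioi 0) : HasDerivAt
        (fun t => ∑ j, (t + y j) ^ (-β) * (t + y L) ^ β * c j)
        (∑ j, β * (y j - y L) * ((t + y j) ^ (-(β + 1)) * (t + y L) ^ (β - 1)) * c j) t :=
      HasDerivAt.fun_sum fun j _ =>
        (hasDerivAt_add_rpow_neg_mul_add_rpow (hpos t ht j) (hpos t ht L)).mul_const (c j)
    have hzero (i) : ∑ j, (x i + y j) ^ (-β) * (x i + y L) ^ β * c j = 0 := by
      simp_rw [mul_right_comm _ ((x i + y L) ^ β), ← Finset.sum_mul, hc i, zero_mul]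
    obtain ⟨z, hz, hz0, hz'⟩ :=
      exists_strictMono_hasDerivAt_eq_zero_s4 ordConnected_Ioi hderiv hx hx0 hzero
    have hreduced (i : Fin m) : ∑ j : Fin m,
        (z i + y j.castSucc) ^ (-(β + 1)) * (β * (y j.castSucc - y L) * c j.castSucc) = 0 := by
      refine (mul_eq_zero.1 ?_).resolve_left (rpow_pos_of_pos (hpos _ (hz0 i) L) (β - 1)).ne'
      rw [Finset.mul_sum, ← hz' i, Fin.sum_univ_castSucc, sub_self, mul_zero, zero_mul,
        zero_mul, add_zero]
      exact Finset.sum_congr rfl fun j _ => by ring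
    have hd := ih (by linarith) (hy.comp (Fin.castSucc_injective m)) (fun j => hy0 _) hz hz0
      hreduced
    have hc_castSucc (j : Fin m) : c j.castSucc = 0 := by
      have hyj : y j.castSucc - y L ≠ 0 := sub_ne_zero.2 (hy.ne (Fin.castSucc_lt_last j).ne)
      simpa [hβ.ne', hyj] using congrFun hd j
    have hcL : c L = 0 := by
      have := hc 0
      simp only [Fin.sum_univ_castSucc, hc_castSucc, mul_zero, Finset.sum_const_zero,
        zero_add] at this
      exact (mul_eq_zero.1 this).resolve_left (rpow_pos_of_pos (hpos _ (hx0 0) L) _).ne'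
    ext j
    induction j using Fin.lastCases with
    | last => exact hcL
    | cast j => exact hc_castSucc j

theorem det_add_rpow_neg_ne_zero {m : ℕ} {β : ℝ} (hβ : 0 < β) {x y : Fin m → ℝ}
    (hx : StrictMono x) (hy : Function.Injective y) (hx0 : ∀ i, 0 < x i) (hy0 : ∀ j, 0 < y j) :
    (of fun i j => (x i + y j) ^ (-β)).det ≠ 0 := by
  intro h
  obtain ⟨c, hc0, hc⟩ := exists_mulVec_eq_zero_iff.2 h
  exact hc0 (eq_zero_of_sum_add_rpow_neg_mul_eq_zero hβ hy hy0 hx hx0 (congrFun hc))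

theorem det_inv_add_pos {m : ℕ} {x : Fin m → ℝ} (hx : StrictMono x) (hx0 : ∀ i, 0 < x i) :
    0 < (of fun i j => (x i + x j)⁻¹).det := by
  refine (posSemidef_inv_add hx0).det_nonneg.lt_of_ne' ?_
  simpa only [rpow_neg_one] using det_add_rpow_neg_ne_zero one_pos hx hx.injective hx0 hx0

theorem continuousOn_det_add_rpow_neg {ι : Type*} [Fintype ι] [DecidableEq ι] (x : ι → ℝ) :
    ContinuousOn (fun p : ℝ × (ι → ℝ) => (of fun i j => (x i + p.2 j) ^ (-p.1)).det)
      {p | ∀ i j, x i + p.2 j ≠ 0} := by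
  refine continuousOn_iff_continuous_domRestrict.2 (Continuous.matrix_det ?_)
  exact continuous_matrix fun i j => (continuous_const.add ((continuous_apply j).comp
    (continuous_snd.comp continuous_subtype_val))).rpow
    (continuous_fst.comp continuous_subtype_val).neg fun p => Or.inl (p.2 i j)

/-- For every `β > 0`, the kernel `K(x,y) = (x+y)^(-β)` is strictly totally
positive on `(0,∞) × (0,∞)`: for all `m ≥ 1` and strictly increasing positive tuples `x`,
`y`, `det [(x i + y j)^(-β)] > 0`. -/
theorem inv_power_kernel_stp (β : ℝ) (hβ : 0 < β) :
    ∀ m : ℕ, 0 < m → ∀ x y : Fin m → ℝ, StrictMono x → StrictMono y →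
      (∀ i, 0 < x i) → (∀ i, 0 < y i) →
      0 < (Matrix.of fun i j => (x i + y j) ^ (-β : ℝ)).det := by
  intro m _ x y hx hy hx0 hy0
  let S : Set (ℝ × (Fin m → ℝ)) := Ioi 0 ×ˢ ({y | StrictMono y} ∩ univ.pi fun _ => Ioi 0)
  have hS : IsPreconnected S := ((convex_Ioi (0 : ℝ)).prod
    (convex_setOf_strictMono_s4.inter (convex_pi fun _ _ => convex_Ioi 0))).isPreconnected
  have hcont := (continuousOn_det_add_rpow_neg x).mono fun p (hp : p ∈ S) i j =>
    (add_pos (hx0 i) (hp.2.2 j trivial)).ne'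
  have hne (p) (hp : p ∈ S) : (of fun i j => (x i + p.2 j) ^ (-p.1)).det ≠ 0 :=
    det_add_rpow_neg_ne_zero hp.1 hx hp.2.1.injective hx0 fun j => hp.2.2 j trivial
  have hbase : 0 < (of fun i j => (x i + x j) ^ (-(1 : ℝ))).det := by
    simpa only [rpow_neg_one] using det_inv_add_pos hx hx0
  exact hS.pos_of_ne_zero hcont hne (a := (1, x)) (b := (β, y))
    ⟨mem_Ioi.2 one_pos, hx, fun i _ => hx0 i⟩ ⟨hβ, hy, fun j _ => hy0 j⟩ hbase
end

section
/- For every β > 0, the kernel K(x,y) = (1 − 2xy + y²)^{−β} is strictly totally positive on (−1,1) × (−1,1). -/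
/-!
Write `D(t)` for the determinant with exponent `-t`. Its columns `u ↦ (a_j + b_j u) ^ (-t)`,
with `a_j = 1 + y_j ^ 2` and `b_j = -2 y_j`, are powers of affine functions with pairwise
independent coefficient vectors. Multiplying a combination of them by one column to the power `t`
and differentiating removes that column and raises the exponent, so by Rolle's theorem a
nontrivial combination of `m` such functions has fewer than `m` zeros: `D(t) ≠ 0` for `t > 0`.
The reciprocal kernel is strictly TP₂, so the identity permutation uniquely maximises
`∏ᵢ K(x_{σ i}, y_i)` and the diagonal term dominates `D(t)` as `t → ∞`. Hence `D` is eventually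
positive, and being continuous and nonvanishing on `(0, ∞)`, it is positive there.
-/

open Set Filter Topology Finset

theorem exists_strictMono_deriv_eq_zero {I : Set ℝ} (hI : I.OrdConnected) {g g' : ℝ → ℝ}
    (hg : ∀ t ∈ I, HasDerivAt g (g' t) t) {n : ℕ} {z : Fin (n + 1) → ℝ} (hz : StrictMono z)
    (hzI : ∀ i, z i ∈ I) (hgz : ∀ i, g (z i) = 0) :
    ∃ ζ : Fin n → ℝ, StrictMono ζ ∧ (∀ i, ζ i ∈ I) ∧ ∀ i, g' (ζ i) = 0 := by
  have hIcc : ∀ i : Fin n, Icc (z i.castSucc) (z i.succ) ⊆ I := fun i => hI.out (hzI _) (hzI _)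
  have hrolle : ∀ i : Fin n, ∃ t ∈ Ioo (z i.castSucc) (z i.succ), g' t = 0 := fun i =>
    exists_hasDerivAt_eq_zero (hz Fin.castSucc_lt_succ)
      (fun t ht => (hg t (hIcc i ht)).continuousAt.continuousWithinAt)
      (by rw [hgz, hgz]) (fun t ht => hg t (hIcc i (Ioo_subset_Icc_self ht)))
  choose ζ hζ hg'ζ using hrolle
  refine ⟨ζ, fun i k hik => ?_, fun i => hIcc i (Ioo_subset_Icc_self (hζ i)), hg'ζ⟩
  calc ζ i < z i.succ := (hζ i).2
    _ ≤ z k.castSucc := hz.monotone (Fin.succ_le_castSucc_iff.mpr hik)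
    _ < ζ k := (hζ k).1

theorem hasDerivAt_rpow_mul_rpow_neg {γ a b a' b' t : ℝ} (h : 0 < a + b * t)
    (h' : 0 < a' + b' * t) :
    HasDerivAt (fun u => (a + b * u) ^ γ * (a' + b' * u) ^ (-γ))
      (γ * (a + b * t) ^ (γ - 1) * ((b * a' - a * b') * (a' + b' * t) ^ (-(γ + 1)))) t := by
  have hA : HasDerivAt (fun u => a + b * u) b t := by
    simpa using ((hasDerivAt_id t).const_mul b).const_add a
  have hB : HasDerivAt (fun u => a' + b' * u) b' t := by
    simpa using ((hasDerivAt_id t).const_mul b').const_add a'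
  refine ((hA.rpow_const (p := γ) (Or.inl h.ne')).fun_mul
    (hB.rpow_const (p := -γ) (Or.inl h'.ne'))).congr_deriv ?_
  have hγ : (a + b * t) ^ γ = (a + b * t) ^ (γ - 1) * (a + b * t) := by
    rw [← Real.rpow_add_one h.ne', sub_add_cancel]
  have hγ' : (a' + b' * t) ^ (-γ) = (a' + b' * t) ^ (-(γ + 1)) * (a' + b' * t) := by
    rw [← Real.rpow_add_one h'.ne']; ring_nf
  rw [hγ, hγ', show -γ - 1 = -(γ + 1) by ring]
  ring

theorem eq_zero_of_forall_sum_mul_rpow_affine_eq_zero {I : Set ℝ} (hI : I.OrdConnected)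
    {n : ℕ} {γ : ℝ} {a b c z : Fin n → ℝ} (hγ : 0 < γ) (hpos : ∀ j, ∀ t ∈ I, 0 < a j + b j * t)
    (hind : Pairwise fun j k => a j * b k ≠ a k * b j) (hz : StrictMono z) (hzI : ∀ i, z i ∈ I)
    (hc : ∀ i, ∑ j, c j * (a j + b j * z i) ^ (-γ) = 0) : c = 0 := by
  induction n generalizing γ with
  | zero => exact Subsingleton.elim _ _
  | succ n ih =>
    set p := Fin.last n
    -- Multiplying by `(a p + b p * u) ^ γ` makes the `p`-th term constant, so it dies on
    -- differentiation while the others keep the form `(a j + b j * u) ^ (-(γ + 1))`.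
    have hderiv : ∀ t ∈ I, HasDerivAt
        (fun u => ∑ j, c j * ((a p + b p * u) ^ γ * (a j + b j * u) ^ (-γ)))
        (γ * (a p + b p * t) ^ (γ - 1) *
          ∑ j, c j * ((b p * a j - a p * b j) * (a j + b j * t) ^ (-(γ + 1)))) t := by
      intro t ht
      rw [Finset.mul_sum]
      refine HasDerivAt.fun_sum fun j _ => ?_
      exact ((hasDerivAt_rpow_mul_rpow_neg (hpos p t ht) (hpos j t ht)).const_mul
        (c j)).congr_deriv (by ring)
    obtain ⟨ζ, hζ, hζI, hζ0⟩ := exists_strictMono_deriv_eq_zero hI hderiv hz hzI fun i => by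
      simp only [mul_left_comm (c _), ← Finset.mul_sum, hc i, mul_zero]
    have hinit :
        (fun j : Fin n => c j.castSucc * (b p * a j.castSucc - a p * b j.castSucc)) = 0 := by
      refine ih (γ := γ + 1) (by linarith) (fun j => hpos _)
        (hind.comp_of_injective (Fin.castSucc_injective n)) hζ hζI fun i => ?_
      have hH := hζ0 i
      rw [Fin.sum_univ_castSucc, mul_comm (b p) (a p), sub_self, zero_mul, mul_zero, add_zero] at hH
      simpa only [mul_assoc] using (mul_eq_zero.mp hH).resolve_left
        (mul_pos hγ (Real.rpow_pos_of_pos (hpos p _ (hζI i)) _)).ne'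
    have hcast (j : Fin n) : c j.castSucc = 0 :=
      (mul_eq_zero.mp (congrFun hinit j)).resolve_right
        (sub_ne_zero.mpr (by rw [mul_comm]; exact hind (Fin.castSucc_lt_last j).ne))
    have hlast : c p = 0 := by
      have h0 := hc 0
      simp only [Fin.sum_univ_castSucc, hcast, zero_mul, sum_const_zero, zero_add] at h0
      exact (mul_eq_zero.mp h0).resolve_right (Real.rpow_pos_of_pos (hpos p _ (hzI 0)) _).ne'
    funext j
    exact Fin.lastCases hlast hcast j

theorem det_rpow_affine_ne_zero {I : Set ℝ} (hI : I.OrdConnected) {n : ℕ} {γ : ℝ}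
    {a b z : Fin n → ℝ} (hγ : 0 < γ) (hpos : ∀ j, ∀ t ∈ I, 0 < a j + b j * t)
    (hind : Pairwise fun j k => a j * b k ≠ a k * b j) (hz : StrictMono z) (hzI : ∀ i, z i ∈ I) :
    (Matrix.of fun i j => (a j + b j * z i) ^ (-γ)).det ≠ 0 := by
  intro hdet
  obtain ⟨c, hc0, hc⟩ := Matrix.exists_mulVec_eq_zero_iff.mpr hdet
  refine hc0 (eq_zero_of_forall_sum_mul_rpow_affine_eq_zero hI hγ hpos hind hz hzI fun i => ?_)
  simpa [Matrix.mulVec, dotProduct, mul_comm] using congrFun hc i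

section StrictlyTP2

variable {ι : Type*} [Fintype ι] [LinearOrder ι]

def IsStrictlyTP2 (M : ι → ι → ℝ) : Prop :=
  ∀ ⦃i i' j j'⦄, i < i' → j < j' → M i j' * M i' j < M i j * M i' j'

theorem exists_card_support_lt_sum_apply_perm_lt {L : ι → ι → ℝ}
    (hL : ∀ ⦃i i' j j'⦄, i < i' → j < j' → L i j' + L i' j < L i j + L i' j')
    {σ : Equiv.Perm ι} (hσ : σ ≠ 1) :
    ∃ τ : Equiv.Perm ι, #τ.support < #σ.support ∧ ∑ i, L (σ i) i < ∑ i, L (τ i) i := by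
  have hne : σ.support.Nonempty := by
    rwa [Finset.nonempty_iff_ne_empty, Ne, Equiv.Perm.support_eq_empty_iff]
  set k := σ.support.min' hne
  have hk : σ k ≠ k := Equiv.Perm.mem_support.mp (σ.support.min'_mem hne)
  have hfix : ∀ a < k, σ a = a := fun a ha => by
    by_contra h; exact (σ.support.min'_le a (Equiv.Perm.mem_support.mpr h)).not_gt ha
  have hkσk : k < σ k := (lt_or_gt_of_ne hk).resolve_left fun h => hk (σ.injective (hfix _ h))
  set j := σ.symm k
  have hσj : σ j = k := σ.apply_symm_apply k
  have hkj : k < j := (lt_or_gt_of_ne fun h : k = j => hk (h ▸ hσj)).resolve_right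
    fun h => h.ne (hσj.symm.trans (hfix j h)).symm
  -- `τ` agrees with `σ` except that it fixes the least moved point `k` and sends `j` to `σ k`.
  set τ := Equiv.swap k (σ k) * σ
  have hτk : τ k = k := by simp [τ]
  have hτj : τ j = σ k := by simp [τ, hσj]
  have hτ : ∀ i, i ≠ k ∧ i ≠ j → τ i = σ i := fun i hi =>
    Equiv.swap_apply_of_ne_of_ne (fun h => hi.2 (σ.injective (h.trans hσj.symm)))
      (fun h => hi.1 (σ.injective h))
  have hdiff : ∑ i, (L (τ i) i - L (σ i) i) = (L k k - L (σ k) k) + (L (σ k) j - L k j) := by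
    rw [Fintype.sum_eq_add k j hkj.ne fun i hi => by rw [hτ i hi, sub_self], hτk, hτj, hσj]
  rw [Finset.sum_sub_distrib] at hdiff
  exact ⟨τ, Equiv.Perm.card_support_swap_mul hk, by linarith [hL hkσk hkj]⟩

theorem sum_apply_perm_lt_sum_diag {L : ι → ι → ℝ}
    (hL : ∀ ⦃i i' j j'⦄, i < i' → j < j' → L i j' + L i' j < L i j + L i' j')
    {σ : Equiv.Perm ι} (hσ : σ ≠ 1) : ∑ i, L (σ i) i < ∑ i, L i i := by
  induction hn : #σ.support using Nat.strong_induction_on generalizing σ with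
  | _ n ih =>
    obtain ⟨τ, hτcard, hτsum⟩ := exists_card_support_lt_sum_apply_perm_lt hL hσ
    rcases eq_or_ne τ 1 with rfl | hτ
    · simpa using hτsum
    · exact hτsum.trans (ih _ (hn ▸ hτcard) hτ rfl)

theorem prod_apply_perm_lt_prod_diag {M : ι → ι → ℝ} (hM : ∀ i j, 0 < M i j)
    (hTP2 : IsStrictlyTP2 M) {σ : Equiv.Perm ι} (hσ : σ ≠ 1) : ∏ i, M (σ i) i < ∏ i, M i i := by
  have hlog := sum_apply_perm_lt_sum_diag (L := fun i j => Real.log (M i j))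
    (fun i i' j j' hi hj => by
      rw [← Real.log_mul (hM _ _).ne' (hM _ _).ne', ← Real.log_mul (hM _ _).ne' (hM _ _).ne']
      exact Real.log_lt_log (mul_pos (hM _ _) (hM _ _)) (hTP2 hi hj)) hσ
  rwa [← Real.log_prod fun i _ => (hM _ _).ne', ← Real.log_prod fun i _ => (hM _ _).ne',
    Real.log_lt_log_iff (prod_pos fun i _ => hM _ _) (prod_pos fun i _ => hM _ _)] at hlog

theorem eventually_det_rpow_pos {M : ι → ι → ℝ} (hM : ∀ i j, 0 < M i j)
    (hTP2 : IsStrictlyTP2 M) :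
    ∀ᶠ t : ℝ in atTop, 0 < (Matrix.of fun i j => M i j ^ t).det := by
  set P : Equiv.Perm ι → ℝ := fun σ => ∏ i, M (σ i) i
  have hP (σ : Equiv.Perm ι) : 0 < P σ := prod_pos fun i _ => hM _ _
  have hdet (t : ℝ) : (Matrix.of fun i j => M i j ^ t).det =
      P 1 ^ t * ∑ σ, ((Equiv.Perm.sign σ : ℤ) : ℝ) * (P σ / P 1) ^ t := by
    rw [Matrix.det_apply, Finset.mul_sum]
    refine sum_congr rfl fun σ _ => ?_
    rw [Real.div_rpow (hP σ).le (hP 1).le, Units.smul_def, zsmul_eq_mul]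
    have hσ : ∏ i, M (σ i) i ^ t = P σ ^ t :=
      Real.finsetProd_rpow _ _ (fun i _ => (hM _ _).le) t
    have h1 := (Real.rpow_pos_of_pos (hP 1) t).ne'
    simp only [Matrix.of_apply, hσ]
    field_simp
  have hterm (σ : Equiv.Perm ι) :
      Tendsto (fun t : ℝ => ((Equiv.Perm.sign σ : ℤ) : ℝ) * (P σ / P 1) ^ t) atTop
        (𝓝 (if σ = 1 then 1 else 0)) := by
    rcases eq_or_ne σ 1 with rfl | hσ
    · simp [div_self (hP 1).ne']
    · rw [if_neg hσ, ← mul_zero ((Equiv.Perm.sign σ : ℤ) : ℝ)]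
      refine (tendsto_rpow_atTop_of_base_lt_one _ ?_ ?_).const_mul _
      · linarith [div_pos (hP σ) (hP 1)]
      · exact (div_lt_one (hP 1)).mpr (prod_apply_perm_lt_prod_diag hM hTP2 hσ)
  have hlim :
      Tendsto (fun t : ℝ => ∑ σ, ((Equiv.Perm.sign σ : ℤ) : ℝ) * (P σ / P 1) ^ t) atTop (𝓝 1) := by
    simpa using tendsto_finsetSum univ fun σ _ => hterm σ
  filter_upwards [hlim.eventually (lt_mem_nhds one_pos)] with t ht
  rw [hdet]
  exact mul_pos (Real.rpow_pos_of_pos (hP 1) t) ht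

end StrictlyTP2

theorem one_sub_two_mul_mul_add_sq_pos {x : ℝ} (hx : x ∈ Ioo (-1 : ℝ) 1) (y : ℝ) :
    0 < 1 - 2 * x * y + y ^ 2 := by
  nlinarith [sq_nonneg (y - x), mul_pos (sub_pos.mpr hx.2) (neg_lt_iff_pos_add.mp hx.1)]

theorem mul_lt_one_of_mem_Ioo {y y' : ℝ} (hy : y ∈ Ioo (-1 : ℝ) 1)
    (hy' : y' ∈ Ioo (-1 : ℝ) 1) : y * y' < 1 := by
  nlinarith [mul_pos (sub_pos.mpr hy.2) (neg_lt_iff_pos_add.mp hy'.1),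
    mul_pos (sub_pos.mpr hy'.2) (neg_lt_iff_pos_add.mp hy.1)]

theorem one_add_sq_mul_ne {y y' : ℝ} (hne : y ≠ y') (hyy' : y * y' < 1) :
    (1 + y ^ 2) * (-2 * y') ≠ (1 + y' ^ 2) * (-2 * y) := by
  intro h
  have : (y - y') * (1 - y * y') = 0 := by linear_combination h / 2
  rcases mul_eq_zero.mp this with h' | h'
  · exact hne (sub_eq_zero.mp h')
  · linarith

theorem one_sub_two_mul_mul_add_sq_mul_lt {x x' y y' : ℝ} (hx : x < x') (hy : y < y')
    (hyy' : y * y' < 1) :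
    (1 - 2 * x * y + y ^ 2) * (1 - 2 * x' * y' + y' ^ 2) <
      (1 - 2 * x * y' + y' ^ 2) * (1 - 2 * x' * y + y ^ 2) := by
  have h : 0 < (x' - x) * (y' - y) * (1 - y * y') :=
    mul_pos (mul_pos (sub_pos.mpr hx) (sub_pos.mpr hy)) (sub_pos.mpr hyy')
  linear_combination 2 * h

/-- For every `β > 0`, the kernel `K(x,y) = (1 - 2xy + y²)^(-β)` is strictly
totally positive on `(-1,1) × (-1,1)`. -/
theorem ultraspherical_kernel_stp (β : ℝ) (hβ : 0 < β) :
    ∀ m : ℕ, 0 < m → ∀ x y : Fin m → ℝ, StrictMono x → StrictMono y →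
      (∀ i, x i ∈ Set.Ioo (-1 : ℝ) 1) → (∀ i, y i ∈ Set.Ioo (-1 : ℝ) 1) →
      0 < (Matrix.of fun i j => (1 - 2 * x i * y j + y j ^ 2) ^ (-β : ℝ)).det := by
  intro m _ x y hx hy hxI hyI
  set E : Fin m → Fin m → ℝ := fun i j => 1 - 2 * x i * y j + y j ^ 2
  have hE (i j) : 0 < E i j := one_sub_two_mul_mul_add_sq_pos (hxI i) (y j)
  set F : ℝ → ℝ := fun t => (Matrix.of fun i j => E i j ^ (-t)).det
  have hF_cont : Continuous F := .matrix_det <| continuous_matrix fun i j =>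
    continuous_const.rpow continuous_neg fun _ => .inl (hE i j).ne'
  have hpos (j : Fin m) : ∀ t ∈ Ioo (-1 : ℝ) 1, 0 < (1 + y j ^ 2) + (-2 * y j) * t :=
    fun t ht => by linarith [one_sub_two_mul_mul_add_sq_pos ht (y j)]
  have hind : Pairwise fun j k => (1 + y j ^ 2) * (-2 * y k) ≠ (1 + y k ^ 2) * (-2 * y j) :=
    fun j k hjk => one_add_sq_mul_ne (hy.injective.ne hjk) (mul_lt_one_of_mem_Ioo (hyI j) (hyI k))
  have hF_ne (t : ℝ) (ht : 0 < t) : F t ≠ 0 := by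
    convert det_rpow_affine_ne_zero ordConnected_Ioo ht hpos hind hx hxI using 6
    simp only [E]
    ring
  have hTP2 : IsStrictlyTP2 fun i j => (E i j)⁻¹ := fun i i' j j' hi hj => by
    rw [← mul_inv, ← mul_inv, inv_lt_inv₀ (mul_pos (hE _ _) (hE _ _)) (mul_pos (hE _ _) (hE _ _))]
    exact one_sub_two_mul_mul_add_sq_mul_lt (hx hi) (hy hj) (mul_lt_one_of_mem_Ioo (hyI j) (hyI j'))
  obtain ⟨B, hFB, hβB⟩ := ((eventually_det_rpow_pos (fun i j => inv_pos.mpr (hE i j)) hTP2).and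
    (eventually_ge_atTop β)).exists
  simp only [Real.inv_rpow (hE _ _).le, ← Real.rpow_neg (hE _ _).le] at hFB
  by_contra hFβ
  obtain ⟨t, ht, hFt⟩ := intermediate_value_Icc hβB hF_cont.continuousOn ⟨not_lt.mp hFβ, hFB.le⟩
  exact hF_ne t (hβ.trans_le ht.1) hFt
end

section
/- Suppose T : ℝ[x] → ℝ[x] is a linear, invertible, degree-preserving operator that maps every polynomial whose roots all lie in the open interval (c,d) to a polynomial whose roots all lie in the closed interval [a,b]. Then T in fact maps every polynomial with all roots in (c,d) to a polynomial with all roots in the open interval (a,b). -/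
open Polynomial

/-- A real polynomial has all of its roots (with multiplicity) in the set `s`:
it is nonzero, splits over `ℝ`, and each root lies in `s`. -/
def RootsIn (p : Polynomial ℝ) (s : Set ℝ) : Prop :=
  p ≠ 0 ∧ (p.roots.card : ℕ) = p.natDegree ∧ ∀ r ∈ p.roots, r ∈ s

/-!
If `T p` vanished at an endpoint, say `b`, for some `p` with all roots in `(c, d)`, move one root
`r` of `p = (X - C r) * m` to `r + ε`: the polynomial `p - ε • m` still has its roots in `(c, d)`,
so `T (p - ε • m)` has its roots in `[a, b]` and hence `(T (p - ε • m)).eval b` has the sign of its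
leading coefficient, which for small `ε` is that of `T p`. But this value is `-ε * (T m).eval b`,
which changes sign with `ε` unless `(T m).eval b = 0`. As `m` has smaller degree, induction
reduces this to constant `p`, for which `T p` is a nonzero constant. At `a` the same argument runs with the sign `(-1) ^ deg`.
-/

open Filter Topology

theorem eq_zero_of_eventually_nonneg_mul {c : ℝ} (h : ∀ᶠ s in 𝓝 (0 : ℝ), 0 ≤ s * c) : c = 0 := by
  obtain ⟨s, hs, hsc⟩ := ((h.filter_mono nhdsWithin_le_nhds).and
    (self_mem_nhdsWithin : Set.Ioi (0 : ℝ) ∈ 𝓝[>] 0)).exists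
  obtain ⟨t, ht, htc⟩ := ((h.filter_mono nhdsWithin_le_nhds).and
    (self_mem_nhdsWithin : Set.Iio (0 : ℝ) ∈ 𝓝[<] 0)).exists
  nlinarith

namespace RootsIn

variable {p q : ℝ[X]} {s t : Set ℝ}

theorem mono (hp : RootsIn p s) (hst : s ⊆ t) : RootsIn p t :=
  ⟨hp.1, hp.2.1, fun r hr => hst (hp.2.2 r hr)⟩

theorem X_sub_C {r : ℝ} (hr : r ∈ s) : RootsIn (X - C r) s :=
  ⟨X_sub_C_ne_zero r, by simp, by simpa using hr⟩

theorem mul (hp : RootsIn p s) (hq : RootsIn q s) : RootsIn (p * q) s := by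
  have hpq : p * q ≠ 0 := mul_ne_zero hp.1 hq.1
  refine ⟨hpq, ?_, ?_⟩
  · rw [roots_mul hpq, Multiset.card_add, hp.2.1, hq.2.1, natDegree_mul hp.1 hq.1]
  · rw [roots_mul hpq]
    intro r hr
    rcases Multiset.mem_add.1 hr with hr | hr
    exacts [hp.2.2 r hr, hq.2.2 r hr]

theorem of_dvd (hq : RootsIn q s) (hpq : p ∣ q) : RootsIn p s := by
  obtain ⟨k, rfl⟩ := hpq
  have hp : p ≠ 0 := left_ne_zero_of_mul hq.1
  have hk : k ≠ 0 := right_ne_zero_of_mul hq.1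
  have hcard := hq.2.1
  rw [roots_mul hq.1, Multiset.card_add, natDegree_mul hp hk] at hcard
  refine ⟨hp, le_antisymm (card_roots' p) ?_, fun r hr => hq.2.2 r ?_⟩
  · linarith [card_roots' k]
  · rw [roots_mul hq.1]; exact Multiset.mem_add.2 (Or.inl hr)

theorem eval_mul_leadingCoeff_nonneg {x : ℝ} (hp : RootsIn p (Set.Iic x)) :
    0 ≤ p.eval x * p.leadingCoeff := by
  rw [(splits_iff_card_roots.mpr hp.2.1).eval_eq_prod_roots, mul_right_comm]
  refine mul_nonneg (mul_self_nonneg _) (Multiset.prod_nonneg fun y hy => ?_)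
  obtain ⟨r, hr, rfl⟩ := Multiset.mem_map.1 hy
  exact sub_nonneg.2 (hp.2.2 r hr)

theorem neg_one_pow_mul_eval_mul_leadingCoeff_nonneg {x : ℝ} (hp : RootsIn p (Set.Ici x)) :
    0 ≤ (-1) ^ p.natDegree * (p.eval x * p.leadingCoeff) := by
  have hprod : (p.roots.map (x - ·)).prod = (-1) ^ p.natDegree * (p.roots.map (· - x)).prod := by
    rw [← hp.2.1, ← Multiset.card_map (· - x), ← Multiset.prod_map_neg, Multiset.map_map]
    simp
  rw [(splits_iff_card_roots.mpr hp.2.1).eval_eq_prod_roots, hprod]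
  have hsq : ((-1 : ℝ) ^ p.natDegree) ^ 2 = 1 := by rw [← pow_mul, mul_comm, pow_mul]; norm_num
  have hP : 0 ≤ (p.roots.map (· - x)).prod := Multiset.prod_nonneg fun y hy => by
    obtain ⟨r, hr, rfl⟩ := Multiset.mem_map.1 hy
    exact sub_nonneg.2 (hp.2.2 r hr)
  nlinarith [mul_nonneg (mul_self_nonneg p.leadingCoeff) hP]

theorem Ioo_of_Icc {a b : ℝ} (hp : RootsIn p (Set.Icc a b)) (ha : p.eval a ≠ 0)
    (hb : p.eval b ≠ 0) : RootsIn p (Set.Ioo a b) := by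
  refine ⟨hp.1, hp.2.1, fun r hr => ?_⟩
  have hroot : p.eval r = 0 := isRoot_of_mem_roots hr
  exact ⟨(hp.2.2 r hr).1.lt_of_ne (by rintro rfl; exact ha hroot),
    (hp.2.2 r hr).2.lt_of_ne (by rintro rfl; exact hb hroot)⟩

theorem exists_eventually_sub_smul (hs : IsOpen s) (hp : RootsIn p s) (hpos : 0 < p.natDegree) :
    ∃ m : ℝ[X], RootsIn m s ∧ m.degree < p.degree ∧ ∀ᶠ ε in 𝓝 (0 : ℝ), RootsIn (p - ε • m) s := by
  obtain ⟨r, hr⟩ := Multiset.card_pos_iff_exists_mem.1 (hp.2.1 ▸ hpos)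
  set m := p /ₘ (X - C r)
  have hfac : (X - C r) * m = p := mul_divByMonic_eq_iff_isRoot.2 (isRoot_of_mem_roots hr)
  have hm : RootsIn m s := hp.of_dvd ⟨X - C r, by rw [← hfac, mul_comm]⟩
  refine ⟨m, hm, ?_, ?_⟩
  · exact degree_divByMonic_lt p _ hp.1 (by simp)
  · have hcont : Tendsto (fun ε : ℝ => r + ε) (𝓝 0) (𝓝 r) := by
      simpa using tendsto_const_nhds.add (tendsto_id (x := 𝓝 (0 : ℝ)))
    filter_upwards [hcont.eventually_mem (hs.mem_nhds (hp.2.2 r hr))] with ε hε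
    have : p - ε • m = (X - C (r + ε)) * m := by
      rw [← hfac, smul_eq_C_mul, C_add]; ring
    exact this ▸ (X_sub_C hε).mul hm

end RootsIn

section DegreePreserving

variable {T : ℝ[X] →ₗ[ℝ] ℝ[X]} (hdeg : ∀ p, (T p).degree = p.degree)
include hdeg

theorem apply_ne_zero_of_degree_eq {p : ℝ[X]} (hp : p ≠ 0) : T p ≠ 0 := by
  rw [Ne, ← degree_eq_bot, hdeg, degree_eq_bot]
  exact hp

theorem eval_apply_ne_zero_of_sign_nonneg {U : Set ℝ} (hU : IsOpen U) {e : ℝ} {w : ℕ → ℝ}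
    (hw : ∀ n, w n ≠ 0)
    (hsign : ∀ p, RootsIn p U → 0 ≤ w (T p).natDegree * ((T p).eval e * (T p).leadingCoeff))
    {p : ℝ[X]} (hp : RootsIn p U) : (T p).eval e ≠ 0 := by
  induction hn : p.natDegree using Nat.strong_induction_on generalizing p with
  | _ n ih =>
  rcases Nat.eq_zero_or_pos n with hn0 | hpos
  · obtain ⟨k, hk⟩ :=
      natDegree_eq_zero.1 ((natDegree_eq_of_degree_eq (hdeg p)).trans (hn.trans hn0))
    rw [← hk, eval_C]
    rintro rfl
    exact apply_ne_zero_of_degree_eq hdeg hp.1 (by rw [← hk, C_0])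
  obtain ⟨m, hm, hlt, hev⟩ := hp.exists_eventually_sub_smul hU (hn ▸ hpos)
  refine fun hpe => ih _ (hn ▸ natDegree_lt_natDegree hm.1 hlt) hm rfl ?_
  have hsmall (ε : ℝ) : (ε • T m).degree < (T p).degree :=
    (degree_smul_le ε _).trans_lt (by rwa [hdeg, hdeg])
  have hlin : ∀ᶠ ε in 𝓝 (0 : ℝ),
      0 ≤ ε * -(w (T p).natDegree * ((T m).eval e * (T p).leadingCoeff)) := by
    filter_upwards [hev] with ε hε
    have := hsign _ hε
    rw [map_sub, map_smul, leadingCoeff_sub_of_degree_lt (hsmall ε),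
      natDegree_eq_of_degree_eq (degree_sub_eq_left_of_degree_lt (hsmall ε)), eval_sub,
      eval_smul, hpe, smul_eq_mul] at this
    linarith
  have hTp : (T p).leadingCoeff ≠ 0 :=
    leadingCoeff_ne_zero.2 (apply_ne_zero_of_degree_eq hdeg hp.1)
  simpa [hw, hTp] using eq_zero_of_eventually_nonneg_mul hlin

end DegreePreserving

theorem open_interval_improvement_general (a b c d : ℝ)
    (T : Polynomial ℝ →ₗ[ℝ] Polynomial ℝ)
    (hdeg : ∀ p : Polynomial ℝ, (T p).degree = p.degree)
    (hmap : ∀ p : Polynomial ℝ, RootsIn p (Set.Ioo c d) → RootsIn (T p) (Set.Icc a b)) :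
    ∀ p : Polynomial ℝ, RootsIn p (Set.Ioo c d) → RootsIn (T p) (Set.Ioo a b) := by
  intro p hp
  refine (hmap p hp).Ioo_of_Icc ?_ ?_
  · refine eval_apply_ne_zero_of_sign_nonneg hdeg isOpen_Ioo (w := fun n => (-1) ^ n)
      (fun n => pow_ne_zero n (by norm_num)) (fun q hq => ?_) hp
    exact ((hmap q hq).mono Set.Icc_subset_Ici_self).neg_one_pow_mul_eval_mul_leadingCoeff_nonneg
  · refine eval_apply_ne_zero_of_sign_nonneg hdeg isOpen_Ioo (w := fun _ => 1)
      (fun _ => one_ne_zero) (fun q hq => ?_) hp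
    simpa using ((hmap q hq).mono Set.Icc_subset_Iic_self).eval_mul_leadingCoeff_nonneg

/-- If `T : ℝ[x] → ℝ[x]` is linear, invertible, degree preserving, and maps
every polynomial with all roots in `(c,d)` to a polynomial with all roots in `[a,b]`, then
`T` in fact maps every polynomial with all roots in `(c,d)` to a polynomial with all roots
in the open interval `(a,b)`. -/
theorem open_interval_improvement (a b c d : ℝ)
    (T : Polynomial ℝ →ₗ[ℝ] Polynomial ℝ)
    (hbij : Function.Bijective T)
    (hdeg : ∀ p : Polynomial ℝ, (T p).degree = p.degree)
    (hmap : ∀ p : Polynomial ℝ, RootsIn p (Set.Ioo c d) → RootsIn (T p) (Set.Icc a b)) :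
    ∀ p : Polynomial ℝ, RootsIn p (Set.Ioo c d) → RootsIn (T p) (Set.Ioo a b) :=
  open_interval_improvement_general a b c d T hdeg hmap
end

section
/- Under the hypotheses of the Iserles–Saff setup, the m-th biorthogonal polynomial with respect to the measure G(x,t)dx and nodes t₁,...,t_m is p_m(x) = Σ_{k=0}^m (q_k/(δ_k h_k)) Q_k(x), where the q_k are determined by requiring Σ_{k=0}^m q_k R_k(t_ℓ) = 0 for ℓ = 1,...,m; explicitly, ∫_a^b p_m(x) G(x,t) dx = Σ_{k=0}^m q_k R_k(t), which vanishes at t = t₁,...,t_m. -/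
open Polynomial MeasureTheory

theorem intervalIntegral_eval_finsetSum_C_mul_mul {ι : Type*} (s : Finset ι) (c : ι → ℝ)
    (P : ι → ℝ[X]) (g : ℝ → ℝ) {a b : ℝ} {μ : Measure ℝ}
    (hP : ∀ k ∈ s, IntervalIntegrable (fun x => (P k).eval x * g x) μ a b) :
    ∫ x in a..b, (∑ k ∈ s, C (c k) * P k).eval x * g x ∂μ =
      ∑ k ∈ s, c k * ∫ x in a..b, (P k).eval x * g x ∂μ := by
  have hexpand : (fun x => (∑ k ∈ s, C (c k) * P k).eval x * g x) =
      fun x => ∑ k ∈ s, c k * ((P k).eval x * g x) := by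
    ext x
    simp only [eval_finsetSum, eval_mul, eval_C, Finset.sum_mul, mul_assoc]
  rw [hexpand, intervalIntegral.integral_finsetSum fun k hk => (hP k hk).const_mul (c k)]
  simp only [intervalIntegral.integral_const_mul]

theorem intervalIntegral_eval_finsetSum_C_div_mul_mul {ι : Type*} (s : Finset ι)
    (q w r : ι → ℝ) (P : ι → ℝ[X]) (g : ℝ → ℝ) {a b : ℝ} {μ : Measure ℝ}
    (hw : ∀ k ∈ s, w k ≠ 0)
    (hP : ∀ k ∈ s, IntervalIntegrable (fun x => (P k).eval x * g x) μ a b)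
    (hmoment : ∀ k ∈ s, ∫ x in a..b, (P k).eval x * g x ∂μ = w k * r k) :
    ∫ x in a..b, (∑ k ∈ s, C (q k / w k) * P k).eval x * g x ∂μ = ∑ k ∈ s, q k * r k := by
  rw [intervalIntegral_eval_finsetSum_C_mul_mul s _ P g hP]
  refine Finset.sum_congr rfl fun k hk => ?_
  rw [hmoment k hk, div_mul_eq_mul_div, mul_div_assoc, mul_div_cancel_left₀ _ (hw k hk)]

theorem iserles_saff_biorthogonal_general (a b c d : ℝ)
    (Q R : ℕ → Polynomial ℝ) (h δ : ℕ → ℝ)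
    (hh : ∀ k, 0 < h k) (hδ : ∀ k, δ k ≠ 0)
    (G : ℝ → ℝ → ℝ)
    (hGint : ∀ k : ℕ, ∀ t ∈ Set.Ioo c d,
      ∫ x in a..b, (Q k).eval x * G x t = δ k * h k * (R k).eval t)
    (hInt : ∀ k : ℕ, ∀ t ∈ Set.Ioo c d,
      IntervalIntegrable (fun x => (Q k).eval x * G x t) volume a b)
    (m : ℕ) (q : ℕ → ℝ) :
    (∀ t ∈ Set.Ioo c d,
      ∫ x in a..b,
          (∑ k ∈ Finset.range (m + 1),
            Polynomial.C (q k / (δ k * h k)) * Q k).eval x * G x t =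
        (∑ k ∈ Finset.range (m + 1), Polynomial.C (q k) * R k).eval t) ∧
    (∀ t : Fin m → ℝ, (∀ ℓ, t ℓ ∈ Set.Ioo c d) →
      (∀ ℓ, (∑ k ∈ Finset.range (m + 1), Polynomial.C (q k) * R k).eval (t ℓ) = 0) →
      ∀ ℓ, ∫ x in a..b,
          (∑ k ∈ Finset.range (m + 1),
            Polynomial.C (q k / (δ k * h k)) * Q k).eval x * G x (t ℓ) = 0) := by
  have hmoment : ∀ t ∈ Set.Ioo c d,
      ∫ x in a..b, (∑ k ∈ Finset.range (m + 1), C (q k / (δ k * h k)) * Q k).eval x * G x t =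
        (∑ k ∈ Finset.range (m + 1), C (q k) * R k).eval t := by
    intro t ht
    rw [intervalIntegral_eval_finsetSum_C_div_mul_mul _ q _ _ Q (G · t)
      (fun k _ => mul_ne_zero (hδ k) (hh k).ne') (fun k _ => hInt k t ht)
      (fun k _ => hGint k t ht)]
    simp only [eval_finsetSum, eval_mul, eval_C]
  exact ⟨hmoment, fun t ht hzero ℓ => (hmoment (t ℓ) (ht ℓ)).trans (hzero ℓ)⟩

/-- Under the Iserles–Saff setup (orthogonal `Q_k` with norms `h_k`,
`G(x,t) = ∑ δ_k Q_k(x) R_k(t)` with valid termwise integration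
`∫_a^b Q_k(x) G(x,t) dx = δ_k h_k R_k(t)`), the polynomial
`p_m(x) = ∑_{k=0}^m (q_k/(δ_k h_k)) Q_k(x)` satisfies
`∫_a^b p_m(x) G(x,t) dx = ∑_{k=0}^m q_k R_k(t)` for every `t ∈ (c,d)`; in particular, if
the `q_k` are chosen so that `∑_{k=0}^m q_k R_k(t_ℓ) = 0` for nodes `t₁,…,t_m ∈ (c,d)`,
then `p_m` is the `m`-th biorthogonal polynomial with respect to `G(x,t)dx` and these
nodes: `∫_a^b p_m(x) G(x,t_ℓ) dx = 0` for `1 ≤ ℓ ≤ m`. -/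
theorem iserles_saff_biorthogonal (a b c d : ℝ)
    (Q R : ℕ → Polynomial ℝ) (h δ : ℕ → ℝ)
    (hQdeg : ∀ k, (Q k).degree = k) (hRdeg : ∀ k, (R k).degree = k)
    (hh : ∀ k, 0 < h k) (hδ : ∀ k, δ k ≠ 0)
    (G : ℝ → ℝ → ℝ)
    (hGint : ∀ k : ℕ, ∀ t ∈ Set.Ioo c d,
      ∫ x in a..b, (Q k).eval x * G x t = δ k * h k * (R k).eval t)
    (hInt : ∀ k : ℕ, ∀ t ∈ Set.Ioo c d,
      IntervalIntegrable (fun x => (Q k).eval x * G x t) volume a b)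
    (m : ℕ) (q : ℕ → ℝ) :
    (∀ t ∈ Set.Ioo c d,
      ∫ x in a..b,
          (∑ k ∈ Finset.range (m + 1),
            Polynomial.C (q k / (δ k * h k)) * Q k).eval x * G x t =
        (∑ k ∈ Finset.range (m + 1), Polynomial.C (q k) * R k).eval t) ∧
    (∀ t : Fin m → ℝ, (∀ ℓ, t ℓ ∈ Set.Ioo c d) →
      (∀ ℓ, (∑ k ∈ Finset.range (m + 1), Polynomial.C (q k) * R k).eval (t ℓ) = 0) →
      ∀ ℓ, ∫ x in a..b,
          (∑ k ∈ Finset.range (m + 1),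
            Polynomial.C (q k / (δ k * h k)) * Q k).eval x * G x (t ℓ) = 0) :=
  iserles_saff_biorthogonal_general a b c d Q R h δ hh hδ G hGint hInt m q
end
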